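/- arXiv:1004.0641 — 3 statements merged into one kernel-verified Lean document; each statement's English description precedes it below -/
import Mathlib

section
/- Let f be the piecewise-defined map on ℝ² given by f(x,y) = (2x, (3/2)x + (1/2)y) if x(y−x) > 0; (3x−y, 2y) if x(y−x) < 0; (3x, y/2) if xy ≤ 0 and x ≠ y; and (2x, 2y) if x = y. Then for every n ∈ ℕ and every h ≠ 0: f^n(0,0) = (0,0), f^n(h,h) = (2^n h, 2^n h), f^n(0,h) = (0, h/2^n), and f^n(h,0) = (3^n h, 0). -/
open Filter Set MeasureTheory

noncomputable section

/-- Points of the plane. -/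
abbrev Pt := ℝ × ℝ

/-- The dynamical ball `B_x(δ, n)`. -/
def dynBall (f : Pt → Pt) (x : Pt) (δ : ℝ) (n : ℕ) : Set Pt :=
  {y | ∀ j ≤ n, ‖f^[j] x - f^[j] y‖ < δ}

/-- The line `L_{x,v} = {x + k v : k ∈ ℝ}`. -/
def dynLine (x v : Pt) : Set Pt := {p | ∃ k : ℝ, p = x + k • v}

/-- The distortion `Δ(f,n,x,y) = ‖f^n x - f^n y‖ / ‖x - y‖`. -/
def dynDelta (f : Pt → Pt) (n : ℕ) (x y : Pt) : ℝ := ‖f^[n] x - f^[n] y‖ / ‖x - y‖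

/-- `sup_{y ∈ B_x(δ,n)\{x}} Δ(f,n,x,y)`. -/
def dynSup (f : Pt → Pt) (n : ℕ) (x : Pt) (δ : ℝ) : ℝ :=
  sSup (dynDelta f n x '' (dynBall f x δ n \ {x}))

/-- `sup_{y ∈ (B_x(δ,n)\{x}) ∩ L_{x,v}} Δ(f,n,x,y)`. -/
def dynSupDir (f : Pt → Pt) (n : ℕ) (x v : Pt) (δ : ℝ) : ℝ :=
  sSup (dynDelta f n x '' ((dynBall f x δ n \ {x}) ∩ dynLine x v))

/-- The top new Lyapunov exponent
`χ_N^+(f,x) = limsup_n lim_{δ→0} (1/n) log sup_{y ∈ B_x(δ,n)\{x}} Δ(f,n,x,y)`;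
the limit as `δ → 0⁺` is realized as the infimum over `δ > 0` (valid by monotonicity). -/
def newLyap (f : Pt → Pt) (x : Pt) : ℝ :=
  limsup (fun n : ℕ =>
    sInf ((fun δ => (n : ℝ)⁻¹ * Real.log (dynSup f n x δ)) '' Ioi (0 : ℝ))) atTop

/-- The directional new Lyapunov exponent `χ_N^+(f,x,v)`. -/
def newLyapDir (f : Pt → Pt) (x v : Pt) : ℝ :=
  limsup (fun n : ℕ =>
    sInf ((fun δ => (n : ℝ)⁻¹ * Real.log (dynSupDir f n x v δ)) '' Ioi (0 : ℝ))) atTop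

/-- `g_n^δ(x) = sup_{y ∈ B_x(δ,n)\{x}} log Δ(f,n,x,y)`. -/
def gLog (f : Pt → Pt) (δ : ℝ) (n : ℕ) (x : Pt) : ℝ :=
  sSup ((fun y => Real.log (dynDelta f n x y)) '' (dynBall f x δ n \ {x}))

open Classical in
/-- The piecewise map of the example: `f(x,y) = (2x, (3/2)x + (1/2)y)` if `x(y−x) > 0`;
`(3x−y, 2y)` if `x(y−x) < 0`; `(3x, y/2)` if `xy ≤ 0` and `x ≠ y`; `(2x, 2y)` if `x = y`. -/
def examplePiecewise (p : Pt) : Pt :=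
  if p.1 = p.2 then (2 * p.1, 2 * p.2)
  else if p.1 * (p.2 - p.1) > 0 then (2 * p.1, 3 / 2 * p.1 + 1 / 2 * p.2)
  else if p.1 * (p.2 - p.1) < 0 then (3 * p.1 - p.2, 2 * p.2)
  else (3 * p.1, p.2 / 2)

/-- iterates of the piecewise example map on special points. -/
theorem examplePiecewise_iterates (n : ℕ) (h : ℝ) (hh : h ≠ 0) :
    examplePiecewise^[n] (0, 0) = (0, 0) ∧
    examplePiecewise^[n] (h, h) = (2 ^ n * h, 2 ^ n * h) ∧
    examplePiecewise^[n] (0, h) = (0, h / 2 ^ n) ∧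
    examplePiecewise^[n] (h, 0) = (3 ^ n * h, 0) := by
  induction n with
  | zero => simp
  | succ n ih =>
    obtain ⟨ih0, ih1, ih2, ih3⟩ := ih
    have h2 : h / 2 ^ n ≠ 0 := by positivity
    have h3 : (3:ℝ) ^ n * h ≠ 0 := by positivity
    refine ⟨?_, ?_, ?_, ?_⟩
    · rw [Function.iterate_succ_apply', ih0]
      simp [examplePiecewise]
    · rw [Function.iterate_succ_apply', ih1]
      simp only [examplePiecewise]
      norm_num
      ring
    · rw [Function.iterate_succ_apply', ih2]
      simp only [examplePiecewise]
      rw [if_neg (fun e => h2 e.symm)]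
      norm_num
      ring
    · rw [Function.iterate_succ_apply', ih3]
      simp only [examplePiecewise]
      rw [if_neg h3, if_neg, if_pos]
      · norm_num; ring
      · nlinarith [sq_nonneg ((3:ℝ)^n*h), sq_pos_of_ne_zero h3]
      · nlinarith [sq_nonneg ((3:ℝ)^n*h)]

end
end

section
/- For the map f of the previous example, the point (0,0) has at least three distinct directional new Lyapunov exponents: along direction (1,1) the exponent is log 2, along direction (0,1) the exponent is −log 2, and along direction (1,0) the exponent is log 3. In particular a continuous (non-differentiable) map on ℝ² can have more than 2 distinct directional new Lyapunov exponents at a point. -/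
open Filter Set MeasureTheory

noncomputable section

/-! Each of the three lines is invariant under `examplePiecewise`, which acts on it as
multiplication by `2`, `1/2` and `3` respectively. Whenever `f (k • v) = (r * k) • v` for all
`k`, every distortion ratio `Δ(f, n, 0, k • v)` equals `|r| ^ n`, so the directional exponent
at `0` along `v` is `log |r| = log r`. -/

open Topology

lemma newLyapDir_eq_log_of_dynSupDir_eq_pow {f : Pt → Pt} {x v : Pt} {r : ℝ}
    (h : ∀ (n : ℕ) (δ : ℝ), 0 < δ → dynSupDir f n x v δ = r ^ n) :
    newLyapDir f x v = Real.log r := by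
  have hconst : (fun n : ℕ =>
      sInf ((fun δ => (n : ℝ)⁻¹ * Real.log (dynSupDir f n x v δ)) '' Ioi (0 : ℝ)))
      =ᶠ[atTop] fun _ => Real.log r := by
    filter_upwards [eventually_ne_atTop 0] with n hn
    have hn' : (n : ℝ) ≠ 0 := Nat.cast_ne_zero.mpr hn
    have hEq : EqOn (fun δ => (n : ℝ)⁻¹ * Real.log (dynSupDir f n x v δ))
        (fun _ => Real.log r) (Ioi 0) := fun δ hδ => by
      simp only [h n δ hδ, Real.log_pow, inv_mul_cancel_left₀ hn']
    rw [hEq.image_eq, nonempty_Ioi.image_const, csInf_singleton]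
  rw [newLyapDir, limsup_congr hconst, limsup_const]

section LineScaling

variable {f : Pt → Pt} {v : Pt} {r : ℝ}

lemma iterate_apply_smul_of_apply_smul (hf : ∀ k : ℝ, f (k • v) = (r * k) • v) (n : ℕ)
    (k : ℝ) : f^[n] (k • v) = (r ^ n * k) • v := by
  induction n with
  | zero => simp
  | succ n ih => rw [Function.iterate_succ_apply', ih, hf, ← mul_assoc, ← pow_succ']

lemma norm_iterate_zero_sub_iterate_smul (hf : ∀ k : ℝ, f (k • v) = (r * k) • v) (n : ℕ)
    (k : ℝ) : ‖f^[n] 0 - f^[n] (k • v)‖ = |r| ^ n * (|k| * ‖v‖) := by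
  have h0 : f^[n] 0 = 0 := by simpa using iterate_apply_smul_of_apply_smul hf n 0
  rw [h0, iterate_apply_smul_of_apply_smul hf, zero_sub, norm_neg, norm_smul, Real.norm_eq_abs,
    abs_mul, abs_pow, mul_assoc]

lemma dynDelta_zero_smul (hv : v ≠ 0) (hf : ∀ k : ℝ, f (k • v) = (r * k) • v) (n : ℕ)
    {k : ℝ} (hk : k ≠ 0) : dynDelta f n 0 (k • v) = |r| ^ n := by
  have hkv : |k| * ‖v‖ ≠ 0 := by positivity
  rw [dynDelta, norm_iterate_zero_sub_iterate_smul hf, zero_sub, norm_neg, norm_smul,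
    Real.norm_eq_abs, mul_div_cancel_right₀ _ hkv]

lemma exists_smul_mem_dynBall (hf : ∀ k : ℝ, f (k • v) = (r * k) • v) (n : ℕ) {δ : ℝ}
    (hδ : 0 < δ) : ∃ k : ℝ, k ≠ 0 ∧ k • v ∈ dynBall f 0 δ n := by
  have hsmall : ∀ᶠ k in 𝓝[≠] (0 : ℝ), ∀ j ∈ Iic n, ‖f^[j] 0 - f^[j] (k • v)‖ < δ := by
    refine (eventually_all_finite (finite_Iic n)).2 fun j _ => ?_
    simp_rw [norm_iterate_zero_sub_iterate_smul hf]
    have hlim : Tendsto (fun k : ℝ => |r| ^ j * (|k| * ‖v‖)) (𝓝 0) (𝓝 0) := by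
      simpa using ((continuous_abs.mul continuous_const).const_mul (|r| ^ j)).tendsto (0 : ℝ)
    exact (hlim.eventually_lt_const hδ).filter_mono nhdsWithin_le_nhds
  obtain ⟨k, hball, hk⟩ := (hsmall.and self_mem_nhdsWithin).exists
  exact ⟨k, hk, fun j hj => hball j hj⟩

lemma dynSupDir_zero_of_apply_smul (hv : v ≠ 0) (hf : ∀ k : ℝ, f (k • v) = (r * k) • v)
    (n : ℕ) {δ : ℝ} (hδ : 0 < δ) : dynSupDir f n 0 v δ = |r| ^ n := by
  have hconst : EqOn (dynDelta f n 0) (fun _ => |r| ^ n)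
      ((dynBall f 0 δ n \ {0}) ∩ dynLine 0 v) := by
    rintro _ ⟨⟨-, hy0⟩, k, rfl⟩
    rw [zero_add] at hy0 ⊢
    exact dynDelta_zero_smul hv hf n fun hk => hy0 (by simp [hk])
  obtain ⟨k, hk, hball⟩ := exists_smul_mem_dynBall hf n hδ
  have hne : ((dynBall f 0 δ n \ {0}) ∩ dynLine 0 v).Nonempty :=
    ⟨k • v, ⟨hball, by simp [hk, hv]⟩, k, by rw [zero_add]⟩
  rw [dynSupDir, hconst.image_eq, hne.image_const, csSup_singleton]

theorem newLyapDir_zero_of_apply_smul (hv : v ≠ 0) (hf : ∀ k : ℝ, f (k • v) = (r * k) • v) :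
    newLyapDir f 0 v = Real.log r := by
  rw [newLyapDir_eq_log_of_dynSupDir_eq_pow fun n _ hδ =>
    dynSupDir_zero_of_apply_smul hv hf n hδ, Real.log_abs]

end LineScaling

lemma examplePiecewise_smul_one_one (k : ℝ) :
    examplePiecewise (k • (1, 1)) = (2 * k) • (1, 1) := by
  simp [examplePiecewise]

lemma examplePiecewise_smul_zero_one (k : ℝ) :
    examplePiecewise (k • (0, 1)) = (2⁻¹ * k) • (0, 1) := by
  by_cases hk : k = 0 <;> simp [examplePiecewise, hk, eq_comm (a := (0 : ℝ))]
  ring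

lemma examplePiecewise_smul_one_zero (k : ℝ) :
    examplePiecewise (k • (1, 0)) = (3 * k) • (1, 0) := by
  by_cases hk : k = 0 <;> simp [examplePiecewise, hk, mul_self_nonneg]

/-- the point `(0,0)` has at least three distinct directional new Lyapunov
exponents for the (continuous, non-differentiable) piecewise example map:
`log 2` along `(1,1)`, `−log 2` along `(0,1)` and `log 3` along `(1,0)`. -/
theorem examplePiecewise_three_exponents :
    newLyapDir examplePiecewise (0, 0) (1, 1) = Real.log 2 ∧
    newLyapDir examplePiecewise (0, 0) (0, 1) = -Real.log 2 ∧
    newLyapDir examplePiecewise (0, 0) (1, 0) = Real.log 3 := by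
  rw [Prod.mk_zero_zero]
  refine ⟨newLyapDir_zero_of_apply_smul (by simp) examplePiecewise_smul_one_one, ?_,
    newLyapDir_zero_of_apply_smul (by simp) examplePiecewise_smul_one_zero⟩
  rw [newLyapDir_zero_of_apply_smul (by simp) examplePiecewise_smul_zero_one, Real.log_inv]

end
end

section
/- For the piecewise map f of the example, the distortion Δ(f,n,(0,0),(h,h)) = 2^n, Δ(f,n,(0,0),(0,h)) = 2^{−n}, and Δ(f,n,(0,0),(h,0)) = 3^n for all h ≠ 0 and n ∈ ℕ, where Δ(f,n,x,y) := ‖f^n(x)−f^n(y)‖/‖x−y‖. -/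
open Filter Set MeasureTheory

noncomputable section

theorem Function.Semiconj.iterate_smul_apply {M α : Type*} [Monoid M] [SMul M α]
    {f : α → α} {v : α} {c : M} (hf : Function.Semiconj (· • v) (c * ·) f) (n : ℕ) (t : M) :
    f^[n] (t • v) = (c ^ n * t) • v := by
  rw [← mul_left_iterate_apply]
  exact (hf.iterate_right n t).symm

theorem dynDelta_zero_smul_of_semiconj {f : Pt → Pt} {v : Pt} {c : ℝ}
    (hf : Function.Semiconj (· • v) (c * ·) f) (n : ℕ) {t : ℝ} (ht : t • v ≠ 0) :
    dynDelta f n 0 (t • v) = |c| ^ n := by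
  have hfix : f^[n] 0 = 0 := by
    simpa using hf.iterate_smul_apply n 0
  rw [dynDelta, hfix, hf.iterate_smul_apply, zero_sub, zero_sub, norm_neg, norm_neg, mul_smul,
    norm_smul, norm_pow, Real.norm_eq_abs]
  exact mul_div_cancel_right₀ _ (norm_ne_zero_iff.mpr ht)

namespace examplePiecewise

theorem semiconj_diag :
    Function.Semiconj (fun t : ℝ ↦ t • ((1, 1) : Pt)) (2 * ·) examplePiecewise := by
  intro t
  simp [examplePiecewise]

theorem semiconj_vert :
    Function.Semiconj (fun t : ℝ ↦ t • ((0, 1) : Pt)) (2⁻¹ * ·) examplePiecewise := by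
  intro t
  rcases eq_or_ne t 0 with rfl | ht
  · simp [examplePiecewise, Prod.mk_zero_zero]
  · simp [examplePiecewise, ht.symm, div_eq_inv_mul]

theorem semiconj_hor :
    Function.Semiconj (fun t : ℝ ↦ t • ((1, 0) : Pt)) (3 * ·) examplePiecewise := by
  intro t
  rcases eq_or_ne t 0 with rfl | ht
  · simp [examplePiecewise, Prod.mk_zero_zero]
  · simp [examplePiecewise, ht, mul_self_nonneg]

end examplePiecewise

/-- distortion values for the piecewise example map:
`Δ(f,n,(0,0),(h,h)) = 2^n`, `Δ(f,n,(0,0),(0,h)) = 2^{−n}` and `Δ(f,n,(0,0),(h,0)) = 3^n`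
for all `h ≠ 0` and `n ∈ ℕ`. -/
theorem examplePiecewise_delta (n : ℕ) (h : ℝ) (hh : h ≠ 0) :
    dynDelta examplePiecewise n (0, 0) (h, h) = 2 ^ n ∧
    dynDelta examplePiecewise n (0, 0) (0, h) = (2 ^ n : ℝ)⁻¹ ∧
    dynDelta examplePiecewise n (0, 0) (h, 0) = 3 ^ n := by
  rw [Prod.mk_zero_zero]
  refine ⟨?_, ?_, ?_⟩
  · simpa using dynDelta_zero_smul_of_semiconj examplePiecewise.semiconj_diag n
      (t := h) (by simp [hh])
  · simpa using dynDelta_zero_smul_of_semiconj examplePiecewise.semiconj_vert n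
      (t := h) (by simp [hh])
  · simpa using dynDelta_zero_smul_of_semiconj examplePiecewise.semiconj_hor n
      (t := h) (by simp [hh])

end
end
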